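/- Let (V, d_T) be a finite tree metric in which all pairwise distances between distinct pairs are distinct, and let MST(V, d_T) denote its unique minimum spanning tree over the complete graph on V with edge weights d_T. Then for distinct vertices v, w ∈ V, the pair {v, w} is an edge of MST(V, d_T) if and only if there is no vertex u ∈ V with u ≺ (v,w), where u ≺ (v,w) means d_T(u,v) < d_T(v,w) and d_T(u,w) < d_T(v,w). In other words, the minimum spanning tree of a tree metric coincides with its relative neighborhood graph. -/

import Mathlib

/-!
A tree metric is the sum, over the edges of the tree, of the cut semimetrics given by the two
sides of each edge, and the splits of two edges never cross; hence it satisfies the four-point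
condition.

If `u ≺ (v, w)` for an MST edge `vw`, then `u` lies on one side of the cut of `vw`, and replacing
`vw` by `uw` or `uv` gives a lighter spanning tree. Conversely, if `vw` is not an MST edge, some
edge `xy` on the MST path from `v` to `w` has `x` weakly closer to `v` and `y` strictly closer to
`w`. When no `u ≺ (v, w)` exists, the four-point condition gives `d v w ≤ d x y`, strictly by
distinctness of distances, and exchanging `xy` for `vw` contradicts minimality.
-/

/-- The tree metric: the weighted length of the unique path between `x` and `y`
in the tree `G` with edge weights `f`. -/
noncomputable def treeDist {W : Type} (G : SimpleGraph W) (hG : G.IsTree) (f : Sym2 W → ℝ)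
    (x y : W) : ℝ :=
  ((hG.existsUnique_path x y).choose.edges.map f).sum

/-- `d` is a tree metric: it is the restriction to `V` of the path metric of a finite
weighted tree with positive edge weights. -/
def IsTreeMetric {V : Type} (d : V → V → ℝ) : Prop :=
  ∃ (W : Type) (_ : Fintype W) (G : SimpleGraph W) (hG : G.IsTree) (f : Sym2 W → ℝ)
    (ι : V → W), (∀ e ∈ G.edgeSet, 0 < f e) ∧ Function.Injective ι ∧
      ∀ x y, d x y = treeDist G hG f (ι x) (ι y)

/-- All pairwise distances between distinct pairs are distinct: two distinct pairs can only
have equal distance if they are the same unordered pair. -/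
def DistinctDists {V : Type} (d : V → V → ℝ) : Prop :=
  ∀ x y x' y' : V, x ≠ y → x' ≠ y' → d x y = d x' y' → s(x, y) = s(x', y')

/-- The weight of an unordered edge under the (symmetric) distance `d`. -/
noncomputable def sym2Weight {V : Type} (d : V → V → ℝ) : Sym2 V → ℝ :=
  Sym2.lift ⟨fun x y => (d x y + d y x) / 2, fun _ _ => by ring⟩

/-- The total `d`-weight of a finite set of edges. -/
noncomputable def edgesWeight {V : Type} (d : V → V → ℝ) (E : Finset (Sym2 V)) : ℝ :=
  ∑ e ∈ E, sym2Weight d e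

/-- `E` is the edge set of a spanning tree on `V`: it has no loops and the resulting
graph is connected and acyclic. -/
def IsSpanningTreeEdges {V : Type} (E : Set (Sym2 V)) : Prop :=
  (∀ e ∈ E, ¬ e.IsDiag) ∧ (SimpleGraph.fromEdgeSet E).IsTree

/-- `M` is a minimum spanning tree using only edges from `Base`, with edge weights `d`:
it is a spanning tree contained in `Base` minimizing the total weight among all such
spanning trees.  Taking `Base = Set.univ` gives the MST over the complete graph on `V`. -/
def IsMSTOver {V : Type} [Fintype V] [DecidableEq V] (d : V → V → ℝ)
    (Base : Set (Sym2 V)) (M : Finset (Sym2 V)) : Prop :=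
  ↑M ⊆ Base ∧ IsSpanningTreeEdges (↑M : Set (Sym2 V)) ∧
    ∀ E : Finset (Sym2 V), ↑E ⊆ Base → IsSpanningTreeEdges (↑E : Set (Sym2 V)) →
      edgesWeight d M ≤ edgesWeight d E

namespace SimpleGraph

variable {V : Type*} {G : SimpleGraph V}

lemma Walk.reachable_deleteEdges_or {z r : V} (t : V) (p : G.Walk z r) :
    (G.deleteEdges {s(r, t)}).Reachable z r ∨ (G.deleteEdges {s(r, t)}).Reachable z t := by
  induction p with
  | nil => exact .inl .rfl
  | @cons x y r h p ih =>
    by_cases he : s(x, y) = s(r, t)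
    · rcases Sym2.eq_iff.1 he with ⟨rfl, -⟩ | ⟨rfl, -⟩
      · exact .inl .rfl
      · exact .inr .rfl
    · have hxy : (G.deleteEdges {s(r, t)}).Reachable x y :=
        (deleteEdges_adj.2 ⟨h, he⟩).reachable
      exact ih.imp hxy.trans hxy.trans

lemma Connected.exists_reachable_deleteEdges_iff (hG : G.Connected) (e : Sym2 V) :
    ∃ σ : V → Bool, ∀ x y, (G.deleteEdges {e}).Reachable x y ↔ σ x = σ y := by
  classical
  induction e using Sym2.ind with | _ r t
  set H := G.deleteEdges {s(r, t)}
  have hor (x : V) : H.Reachable x r ∨ H.Reachable x t :=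
    (hG.preconnected x r).elim (·.reachable_deleteEdges_or t)
  refine ⟨fun x ↦ decide (H.Reachable x r), fun x y ↦ ?_⟩
  rw [decide_eq_decide]
  refine ⟨fun h ↦ ⟨h.symm.trans, h.trans⟩, fun h ↦ ?_⟩
  rcases hor x, hor y with ⟨hx | hx, hy | hy⟩
  · exact hx.trans hy.symm
  · exact hx.trans (h.1 hx).symm
  · exact (h.2 hy).trans hy.symm
  · exact hx.trans hy.symm

lemma Reachable.deleteEdges_of_not_reachable {x y r : V} (t : V) (hxy : G.Reachable x y)
    (hxr : ¬ G.Reachable x r) : (G.deleteEdges {s(r, t)}).Reachable x y := by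
  classical
  obtain ⟨p⟩ := hxy
  refine (p.toDeleteEdge _ fun h ↦ hxr ?_).reachable
  exact (p.takeUntil r (p.fst_mem_support_of_mem_edges h)).reachable

lemma reachable_deleteEdges_of_crossing {a b c d : V} {e₁ e₂ : Sym2 V}
    (hac : (G.deleteEdges {e₁}).Reachable a c) (hbd : (G.deleteEdges {e₁}).Reachable b d)
    (hab : ¬ (G.deleteEdges {e₁}).Reachable a b)
    (had : (G.deleteEdges {e₂}).Reachable a d) (hbc : (G.deleteEdges {e₂}).Reachable b c) :
    (G.deleteEdges {e₂}).Reachable a b := by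
  induction e₂ using Sym2.ind with | _ r t
  have hle : (G.deleteEdges {e₁}).deleteEdges {s(r, t)} ≤ G.deleteEdges {s(r, t)} :=
    deleteEdges_mono (deleteEdges_le _)
  by_cases hbr : (G.deleteEdges {e₁}).Reachable b r
  · have har : ¬ (G.deleteEdges {e₁}).Reachable a r := fun h ↦ hab (h.trans hbr.symm)
    exact ((hac.deleteEdges_of_not_reachable t har).mono hle).trans hbc.symm
  · exact had.trans ((hbd.deleteEdges_of_not_reachable t hbr).mono hle).symm

lemma IsAcyclic.mem_edges_iff_not_reachable_deleteEdges (hG : G.IsAcyclic) {x y : V}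
    {p : G.Walk x y} (hp : p.IsPath) {e : Sym2 V} :
    e ∈ p.edges ↔ ¬ (G.deleteEdges {e}).Reachable x y := by
  classical
  refine ⟨fun he ⟨q⟩ ↦ ?_, p.mem_edges_of_not_reachable_deleteEdges⟩
  have hpq := congrArg Subtype.val <| (hG.subsingleton_path x y).elim
    ⟨p, hp⟩ ⟨_, q.bypass_isPath.mapLe (deleteEdges_le {e})⟩
  simp only at hpq
  rw [hpq, Walk.edges_mapLe_eq_edges] at he
  simpa [edgeSet_deleteEdges] using q.edges_subset_edgeSet (q.edges_bypass_subset_edges he)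

lemma IsTree.sup_edge_deleteEdges (hG : G.IsTree) {e : Sym2 V} {a b : V}
    (hab : ¬ (G.deleteEdges {e}).Reachable a b) : (G.deleteEdges {e} ⊔ edge a b).IsTree := by
  refine ⟨(connected_iff_exists_forall_reachable _).2 ⟨a, fun z ↦ ?_⟩,
    (hG.isAcyclic.anti (deleteEdges_le _)).sup_edge_of_not_reachable hab⟩
  obtain ⟨σ, hσ⟩ := hG.connected.exists_reachable_deleteEdges_iff e
  have hne : a ≠ b := by rintro rfl; exact hab .rfl
  have hab' : (G.deleteEdges {e} ⊔ edge a b).Reachable a b :=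
    ((sup_adj ..).2 (.inr ((edge_adj ..).2 ⟨.inl ⟨rfl, rfl⟩, hne⟩))).reachable
  rw [hσ] at hab
  rcases Bool.eq_or_eq_not (σ z) (σ a) with h | h
  · exact (((hσ a z).2 h.symm).mono le_sup_left)
  · have : σ b = σ z := by cases h1 : σ a <;> cases h2 : σ b <;> simp_all
    exact hab'.trans (((hσ b z).2 this).mono le_sup_left)

end SimpleGraph

/-- Read `A, B, C, D` as the sides of `a, b, c, d` with respect to one tree edge of weight `F`. -/
lemma cut_split_of_lt {F : ℝ} (hF : 0 < F) {A B C D : Bool}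
    (h : (if A ≠ C then F else 0) + (if B ≠ D then F else 0) <
      (if A ≠ B then F else 0) + (if C ≠ D then F else 0)) :
    A = C ∧ B = D ∧ A ≠ B := by
  cases A <;> cases B <;> cases C <;> cases D <;> simp at h ⊢ <;> linarith

open SimpleGraph

section TreeDist

variable {W : Type} {G : SimpleGraph W} (hG : G.IsTree) (f : Sym2 W → ℝ)

lemma treeDist_eq_of_isPath {x y : W} {p : G.Walk x y} (hp : p.IsPath) :
    treeDist G hG f x y = (p.edges.map f).sum := by
  rw [treeDist, (hG.existsUnique_path x y).choose_spec.2 p hp]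

lemma treeDist_self (x : W) : treeDist G hG f x x = 0 := by
  simp [treeDist_eq_of_isPath hG f Walk.IsPath.nil]

lemma treeDist_comm (x y : W) : treeDist G hG f x y = treeDist G hG f y x := by
  obtain ⟨p, hp⟩ := hG.connected.preconnected.exists_isPath x y
  rw [treeDist_eq_of_isPath hG f hp, treeDist_eq_of_isPath hG f hp.reverse]
  simp

lemma treeDist_pos (hf : ∀ e ∈ G.edgeSet, 0 < f e) {x y : W} (hxy : x ≠ y) :
    0 < treeDist G hG f x y := by
  obtain ⟨p, hp⟩ := hG.connected.preconnected.exists_isPath x y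
  rw [treeDist_eq_of_isPath hG f hp]
  refine List.sum_pos _ (by simpa using fun e he ↦ hf e (p.edges_subset_edgeSet he)) ?_
  simpa [Walk.edges_eq_nil] using fun h ↦ hxy h.eq

open Classical in
lemma treeDist_eq_sum [Fintype W] (x y : W) :
    treeDist G hG f x y =
      ∑ e ∈ G.edgeFinset with ¬ (G.deleteEdges {e}).Reachable x y, f e := by
  obtain ⟨p, hp⟩ := hG.connected.preconnected.exists_isPath x y
  rw [treeDist_eq_of_isPath hG f hp, ← List.sum_toFinset f hp.isTrail.edges_nodup]
  congr 1
  ext e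
  rw [Finset.mem_filter, List.mem_toFinset,
    ← hG.isAcyclic.mem_edges_iff_not_reachable_deleteEdges hp,
    and_iff_right_of_imp fun he ↦ mem_edgeFinset.2 (p.edges_subset_edgeSet he)]

theorem treeDist_add_le_max [Fintype W] (hf : ∀ e ∈ G.edgeSet, 0 < f e) (a b c d : W) :
    treeDist G hG f a b + treeDist G hG f c d ≤
      max (treeDist G hG f a c + treeDist G hG f b d)
        (treeDist G hG f a d + treeDist G hG f b c) := by
  classical
  choose σ hσ using hG.connected.exists_reachable_deleteEdges_iff
  have hsum (x y : W) :
      treeDist G hG f x y = ∑ e ∈ G.edgeFinset, if σ e x ≠ σ e y then f e else 0 := by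
    simp only [treeDist_eq_sum, Finset.sum_filter, hσ, ne_eq]
  by_contra! h
  obtain ⟨h₁, h₂⟩ := max_lt_iff.1 h
  rw [treeDist_comm hG f c d] at h₂
  simp only [hsum, ← Finset.sum_add_distrib] at h₁ h₂
  obtain ⟨e₁, he₁, h₁⟩ := Finset.exists_lt_of_sum_lt h₁
  obtain ⟨e₂, he₂, h₂⟩ := Finset.exists_lt_of_sum_lt h₂
  obtain ⟨hac, hbd, hab₁⟩ := cut_split_of_lt (hf _ (mem_edgeFinset.1 he₁)) h₁
  obtain ⟨had, hbc, hab₂⟩ := cut_split_of_lt (hf _ (mem_edgeFinset.1 he₂)) h₂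
  rw [← hσ] at hac hbd had hbc
  rw [Ne, ← hσ] at hab₁ hab₂
  exact hab₂ (reachable_deleteEdges_of_crossing hac hbd hab₁ had hbc)

end TreeDist

section TreeMetric

variable {V : Type} {d : V → V → ℝ}

/-- The relation `u ≺ (v, w)` defining the relative neighbourhood graph. -/
def Precedes (d : V → V → ℝ) (u v w : V) : Prop :=
  d u v < d v w ∧ d u w < d v w

lemma sym2Weight_mk (hd : ∀ x y, d x y = d y x) (a b : V) : sym2Weight d s(a, b) = d a b := by
  simp only [sym2Weight, Sym2.lift_mk, hd b a]
  ring

namespace IsTreeMetric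

variable (h : IsTreeMetric d)
include h

lemma comm (x y : V) : d x y = d y x := by
  obtain ⟨W, _, G, hG, f, ι, -, -, hd⟩ := h
  rw [hd, hd, treeDist_comm]

lemma self_eq_zero (x : V) : d x x = 0 := by
  obtain ⟨W, _, G, hG, f, ι, -, -, hd⟩ := h
  rw [hd, treeDist_self]

lemma pos {x y : V} (hxy : x ≠ y) : 0 < d x y := by
  obtain ⟨W, _, G, hG, f, ι, hf, hι, hd⟩ := h
  rw [hd]
  exact treeDist_pos hG f hf (hι.ne hxy)

lemma four_point (a b c e : V) : d a b + d c e ≤ max (d a c + d b e) (d a e + d b c) := by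
  obtain ⟨W, _, G, hG, f, ι, hf, -, hd⟩ := h
  simp only [hd]
  exact treeDist_add_le_max hG f hf _ _ _ _

lemma le_of_forall_not_precedes {v w x y : V} (hno : ∀ u, ¬ Precedes d u v w)
    (hx : d x v ≤ d x w) (hy : d y w < d y v) : d v w ≤ d x y := by
  have hxw : d v w ≤ d x w := by
    by_contra! hlt
    exact hno x ⟨hx.trans_lt hlt, hlt⟩
  have hyv : d v w ≤ d y v := by
    by_contra! hlt
    exact hno y ⟨hlt, hy.trans hlt⟩
  have h4 := h.four_point x w y v
  rw [h.comm w v, h.comm w y] at h4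
  rcases le_max_iff.1 h4 with h4 | h4 <;> linarith

end IsTreeMetric

end TreeMetric

section MST

variable {V : Type} [DecidableEq V]

lemma fromEdgeSet_insert_erase (M : Finset (Sym2 V)) (e : Sym2 V) (a b : V) :
    fromEdgeSet (↑(insert s(a, b) (M.erase e)) : Set (Sym2 V)) =
      (fromEdgeSet (M : Set (Sym2 V))).deleteEdges {e} ⊔ edge a b := by
  rw [deleteEdges_fromEdgeSet, edge, ← fromEdgeSet_union]
  congr 1
  ext
  simp only [Finset.coe_insert, Finset.coe_erase, Set.mem_insert_iff, Set.mem_union,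
    Set.mem_singleton_iff]
  tauto

lemma IsSpanningTreeEdges.insert_erase {M : Finset (Sym2 V)}
    (hM : IsSpanningTreeEdges (M : Set (Sym2 V))) {e : Sym2 V} {a b : V}
    (hab : ¬ ((fromEdgeSet (M : Set (Sym2 V))).deleteEdges {e}).Reachable a b) :
    IsSpanningTreeEdges (↑(insert s(a, b) (M.erase e)) : Set (Sym2 V)) := by
  refine ⟨fun x hx ↦ ?_, fromEdgeSet_insert_erase M e a b ▸ hM.2.sup_edge_deleteEdges hab⟩
  rcases Finset.mem_insert.1 hx with rfl | hx
  · rintro (hdiag : a = b)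
    exact hab (hdiag ▸ .rfl)
  · exact hM.1 x (Finset.mem_of_mem_erase hx)

variable [Fintype V] {d : V → V → ℝ} {M : Finset (Sym2 V)}

lemma IsMSTOver.sym2Weight_le {B : Set (Sym2 V)} (hM : IsMSTOver d B M) {e : Sym2 V}
    (he : e ∈ M) {a b : V} (hB : s(a, b) ∈ B)
    (hab : ¬ ((fromEdgeSet (M : Set (Sym2 V))).deleteEdges {e}).Reachable a b) :
    sym2Weight d e ≤ sym2Weight d s(a, b) := by
  obtain ⟨hMB, hMT, hmin⟩ := hM
  have hnot : s(a, b) ∉ M.erase e := fun hm ↦ by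
    obtain ⟨hne, hm⟩ := Finset.mem_erase.1 hm
    refine hab (deleteEdges_adj.2 ⟨(fromEdgeSet_adj _).2 ⟨hm, ?_⟩, hne⟩).reachable
    rintro rfl
    exact hab .rfl
  have hsub : (↑(insert s(a, b) (M.erase e)) : Set (Sym2 V)) ⊆ B := by
    rw [Finset.coe_insert]
    exact Set.insert_subset hB ((Finset.coe_subset.2 (M.erase_subset e)).trans hMB)
  have := hmin _ hsub (hMT.insert_erase hab)
  unfold edgesWeight at this
  rw [Finset.sum_insert hnot, ← Finset.sum_erase_add _ _ he] at this
  linarith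

lemma IsMSTOver.not_precedes (hd : ∀ x y, d x y = d y x) (hM : IsMSTOver d Set.univ M)
    {v w : V} (hvw : s(v, w) ∈ M) (u : V) : ¬ Precedes d u v w := by
  rintro ⟨huv, huw⟩
  have hadj : (fromEdgeSet (M : Set (Sym2 V))).Adj v w :=
    (fromEdgeSet_adj _).2 ⟨hvw, fun h ↦ hM.2.1.1 _ hvw (h ▸ Sym2.mk_isDiag_iff.2 rfl)⟩
  have hsep := isAcyclic_iff_forall_adj_isBridge.1 hM.2.1.2.isAcyclic hadj
  by_cases hu : ((fromEdgeSet (M : Set (Sym2 V))).deleteEdges {s(v, w)}).Reachable u w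
  · have := hM.sym2Weight_le hvw (Set.mem_univ s(u, v)) fun h ↦ hsep (h.symm.trans hu)
    rw [sym2Weight_mk hd, sym2Weight_mk hd] at this
    linarith [hd u v]
  · have := hM.sym2Weight_le hvw (Set.mem_univ s(u, w)) hu
    rw [sym2Weight_mk hd, sym2Weight_mk hd] at this
    linarith

lemma IsMSTOver.mem_of_forall_not_precedes (htm : IsTreeMetric d) (hdd : DistinctDists d)
    (hM : IsMSTOver d Set.univ M) {v w : V} (hne : v ≠ w) (hno : ∀ u, ¬ Precedes d u v w) :
    s(v, w) ∈ M := by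
  by_contra hvw
  obtain ⟨p, hp⟩ := hM.2.1.2.connected.preconnected.exists_isPath v w
  obtain ⟨⟨⟨x, y⟩, hxy⟩, hδ, hx, hy⟩ := p.exists_boundary_dart {z | d z v ≤ d z w}
    (by simpa [htm.self_eq_zero] using (htm.pos hne).le)
    (by simpa [htm.self_eq_zero, htm.comm w v] using htm.pos hne)
  have hsep := (hM.2.1.2.isAcyclic.mem_edges_iff_not_reachable_deleteEdges hp).1
    (List.mem_map_of_mem hδ)
  have hxyM : s(x, y) ∈ M := ((fromEdgeSet_adj _).1 hxy).1
  have hle := hM.sym2Weight_le hxyM (Set.mem_univ _) hsep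
  rw [sym2Weight_mk htm.comm, sym2Weight_mk htm.comm] at hle
  have hge := htm.le_of_forall_not_precedes hno hx (not_le.1 hy)
  exact hvw (hdd x y v w hxy.ne hne (le_antisymm hle hge) ▸ hxyM)

end MST

/-- For a tree metric with pairwise distinct distances, the MST coincides with the
relative neighborhood graph: distinct `v, w` are joined by an MST edge iff no vertex `u`
satisfies `u ≺ (v,w)`. -/
theorem mst_eq_rng {V : Type} [Fintype V] [DecidableEq V] (d : V → V → ℝ)
    (htm : IsTreeMetric d) (hdd : DistinctDists d)
    (M : Finset (Sym2 V)) (hM : IsMSTOver d Set.univ M)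
    (v w : V) (hne : v ≠ w) :
    s(v, w) ∈ M ↔ ¬ ∃ u : V, d u v < d v w ∧ d u w < d v w :=
  ⟨fun hvw ⟨u, hu⟩ ↦ hM.not_precedes htm.comm hvw u hu,
    fun hno ↦ hM.mem_of_forall_not_precedes htm hdd hne fun u hu ↦ hno ⟨u, hu⟩⟩
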